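/- Assume ν(V) > 0. For every t ∈ (0, b⁻¹], the map f ↦ T(t)f is a bounded linear operator on L¹(Ω,μ) whose operator norm equals max(1, p+q); that is, ‖T(t)f‖_{L¹(Ω)} ≤ max(1, p+q) · ‖f‖_{L¹(Ω)} for all f ∈ L¹(Ω,μ), and for every ε > 0 there is f ∈ L¹(Ω,μ) with ‖f‖_{L¹(Ω)} = 1 and ‖T(t)f‖_{L¹(Ω)} > max(1, p+q) − ε. -/

import Mathlib

open MeasureTheory Set Filter Topology

/-- The measure `ℓ(·,v)` on `V` given by
`ℓ(dw,v) = p w v⁻¹ k(w,v) ν(dw) + q δ_v(dw)`. -/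
noncomputable def ell (p q : ℝ) (k : ℝ → ℝ → ℝ) (ν : Measure ℝ) (V : Set ℝ) (v : ℝ) :
    Measure ℝ :=
  (ν.restrict V).withDensity (fun w => ENNReal.ofReal (p * w * v⁻¹ * k w v)) +
    (ENNReal.ofReal q) • Measure.dirac v

/-- The operator `T(t)` (for `t ∈ [0, b⁻¹]`):
`T(t)f(x,v) = f(x − tv, v)` if `x > tv`, and
`T(t)f(x,v) = ∫_V f(1 + x w v⁻¹ − t w, w) ℓ(dw,v)` if `x ≤ tv`. -/
noncomputable def Tt (p q : ℝ) (k : ℝ → ℝ → ℝ) (ν : Measure ℝ) (V : Set ℝ) (t : ℝ)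
    (f : ℝ × ℝ → ℝ) : ℝ × ℝ → ℝ :=
  fun z =>
    if t * z.2 < z.1 then f (z.1 - t * z.2, z.2)
    else ∫ w, f (1 + z.1 * w * z.2⁻¹ - t * w, w) ∂(ell p q k ν V z.2)

open scoped ENNReal

/-!
For `F ≥ 0`, Tonelli's theorem and the substitutions `x ↦ x - t v` (free transport) and
`x ↦ 1 + x w / v - t w` (reinjection at `x = 1`) give the exact balance
`∫_Ω T(t) F = ∫_V ∫_0^{1-tv} F(x,v) dx dν(v) + (p + q) ∫_V ∫_{1-tv}^1 F(x,v) dx dν(v)`: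
the Jacobian `v / w` cancels the factor `w / v` in `ℓ(dw, v)`, and the kernel term collapses
because `∫_V k(w, ·) dν = 1`. The two fibre integrals add up to `∫_Ω F`, so the norm of `T(t)` is
at most `max 1 (p + q)`, and `|T(t) f| ≤ T(t) |f|` reduces signed `f` to this case. The bound is
attained by normalised indicators of sets lying where `x < 1 - t v` (mass that is only
transported) or where `x > 1 - t v` (mass that is reinjected with total weight `p + q`).
-/

theorem setLIntegral_Ioc_comp_mul_add {m : ℝ} (hm : 0 < m) (c a b : ℝ) {g : ℝ → ℝ≥0∞}
    (hg : Measurable g) :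
    ∫⁻ x in Ioc ((a - c) / m) ((b - c) / m), g (m * x + c) =
      ENNReal.ofReal m⁻¹ * ∫⁻ y in Ioc a b, g y := by
  have hcomp : (fun x : ℝ => m * x + c) = (· + c) ∘ (m * ·) := rfl
  have hmap : Measure.map (fun x : ℝ => m * x + c) volume = ENNReal.ofReal m⁻¹ • volume := by
    rw [hcomp, ← Measure.map_map (measurable_add_const c) (measurable_const_mul m),
      Real.map_volume_mul_left hm.ne', Measure.map_smul, map_add_right_eq_self,
      abs_of_pos (inv_pos.2 hm)]
  have hpre : (fun x : ℝ => m * x + c) ⁻¹' Ioc a b = Ioc ((a - c) / m) ((b - c) / m) := by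
    rw [hcomp, preimage_comp, preimage_add_const_Ioc, preimage_const_mul_Ioc₀ _ _ hm]
  rw [← hpre, ← setLIntegral_map measurableSet_Ioc hg (by fun_prop), hmap,
    Measure.restrict_smul, lintegral_smul_measure, smul_eq_mul]

theorem measurable_setLIntegral_fiber {S : Set (ℝ × ℝ)} (hS : MeasurableSet S)
    {F : ℝ × ℝ → ℝ≥0∞} (hF : Measurable F) :
    Measurable fun v => ∫⁻ x in {x | (x, v) ∈ S}, F (x, v) := by
  have hind : (fun v => ∫⁻ x in {x | (x, v) ∈ S}, F (x, v)) =
      fun v => ∫⁻ x, S.indicator F (x, v) := by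
    funext v
    exact (lintegral_indicator (f := fun x => F (x, v)) (measurable_prodMk_right hS)).symm
  rw [hind]
  exact (hF.indicator hS).lintegral_prod_left'

theorem AEMeasurable.exists_measurable_ge_ae_eq {α : Type*} [MeasurableSpace α] {μ : Measure α}
    {f : α → ℝ≥0∞} (hf : AEMeasurable f μ) : ∃ g, Measurable g ∧ f ≤ g ∧ g =ᵐ[μ] f := by
  set N := toMeasurable μ {x | f x ≠ hf.mk f x}
  have hN : μ N = 0 := by rw [measure_toMeasurable]; exact hf.ae_eq_mk
  refine ⟨fun x => hf.mk f x + N.indicator (fun _ => ∞) x,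
    hf.measurable_mk.add (measurable_const.indicator (measurableSet_toMeasurable _ _)),
    fun x => ?_, ?_⟩
  · by_cases hx : f x = hf.mk f x
    · exact hx.le.trans le_self_add
    · simp [N, indicator_of_mem (subset_toMeasurable μ {x | f x ≠ hf.mk f x} hx)]
  · filter_upwards [hf.ae_eq_mk, measure_eq_zero_iff_ae_notMem.1 hN] with x hx hxN
    simp [indicator_of_notMem hxN, hx]

theorem measurableSet_setOf_mem_Ioo {W : Set ℝ} (hWm : MeasurableSet W) {l r : ℝ → ℝ}
    (hl : Measurable l) (hr : Measurable r) :
    MeasurableSet {z : ℝ × ℝ | z.2 ∈ W ∧ z.1 ∈ Ioo (l z.2) (r z.2)} :=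
  (hWm.preimage measurable_snd).inter
    ((measurableSet_lt (by fun_prop) measurable_fst).inter
      (measurableSet_lt measurable_fst (by fun_prop)))

theorem volume_prod_setOf_mem_Ioo {ν : Measure ℝ} [SFinite ν] {W : Set ℝ} (hWm : MeasurableSet W)
    {l r : ℝ → ℝ} (hl : Measurable l) (hr : Measurable r) :
    (volume.prod ν) {z : ℝ × ℝ | z.2 ∈ W ∧ z.1 ∈ Ioo (l z.2) (r z.2)} =
      ∫⁻ v in W, ENNReal.ofReal (r v - l v) ∂ν := by
  rw [Measure.prod_apply_symm (measurableSet_setOf_mem_Ioo hWm hl hr), ← lintegral_indicator hWm]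
  refine lintegral_congr fun v => ?_
  by_cases hv : v ∈ W
  · rw [indicator_of_mem hv, ← Real.volume_Ioo]
    congr 1
    ext x
    simp [hv]
  · simp [hv]

/-- `T(t)` on `ℝ≥0∞`-valued functions, with lower Lebesgue integrals, so that no integrability
is needed. -/
noncomputable def TtENNReal (p q : ℝ) (k : ℝ → ℝ → ℝ) (ν : Measure ℝ) (V : Set ℝ) (t : ℝ)
    (F : ℝ × ℝ → ℝ≥0∞) : ℝ × ℝ → ℝ≥0∞ :=
  fun z =>
    if t * z.2 < z.1 then F (z.1 - t * z.2, z.2)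
    else ∫⁻ w, F (1 + z.1 * w * z.2⁻¹ - t * w, w) ∂(ell p q k ν V z.2)

/-- The mass of the fibre of `F` over the velocity `v` that stays in `(0, 1)` during time `t`;
`outflowMass` is the mass that leaves through `x = 1` and is fed back by the boundary condition. -/
noncomputable def remainingMass (t : ℝ) (F : ℝ × ℝ → ℝ≥0∞) (v : ℝ) : ℝ≥0∞ :=
  ∫⁻ x in Ioo 0 (1 - t * v), F (x, v)

noncomputable def outflowMass (t : ℝ) (F : ℝ × ℝ → ℝ≥0∞) (v : ℝ) : ℝ≥0∞ :=
  ∫⁻ x in Ioc (1 - t * v) 1, F (x, v)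

theorem measurable_remainingMass (t : ℝ) {F : ℝ × ℝ → ℝ≥0∞} (hF : Measurable F) :
    Measurable (remainingMass t F) :=
  measurable_setLIntegral_fiber (S := {z | 0 < z.1 ∧ z.1 < 1 - t * z.2})
    ((measurableSet_lt measurable_const measurable_fst).inter
      (measurableSet_lt measurable_fst (by fun_prop))) hF

theorem measurable_outflowMass (t : ℝ) {F : ℝ × ℝ → ℝ≥0∞} (hF : Measurable F) :
    Measurable (outflowMass t F) :=
  measurable_setLIntegral_fiber (S := {z | 1 - t * z.2 < z.1 ∧ z.1 ≤ 1})
    ((measurableSet_lt (by fun_prop) measurable_fst).inter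
      (measurableSet_le measurable_fst measurable_const)) hF

section

variable {p q t : ℝ} {k : ℝ → ℝ → ℝ} {ν : Measure ℝ} {V : Set ℝ}

theorem lintegral_ell (hkm : Measurable (Function.uncurry k)) (v : ℝ)
    {h : ℝ → ℝ≥0∞} (hh : Measurable h) :
    ∫⁻ w, h w ∂(ell p q k ν V v) =
      ∫⁻ w in V, ENNReal.ofReal (p * w * v⁻¹ * k w v) * h w ∂ν + ENNReal.ofReal q * h v := by
  rw [ell, lintegral_add_measure,
    lintegral_withDensity_eq_lintegral_mul _ (by fun_prop) hh,
    lintegral_smul_measure, lintegral_dirac' v hh]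
  rfl

theorem measurable_TtENNReal [SFinite ν] (hkm : Measurable (Function.uncurry k))
    {F : ℝ × ℝ → ℝ≥0∞} (hF : Measurable F) : Measurable (TtENNReal p q k ν V t F) := by
  have hboundary : Measurable fun z : ℝ × ℝ =>
      ∫⁻ w in V, ENNReal.ofReal (p * w * z.2⁻¹ * k w z.2) *
        F (1 + z.1 * w * z.2⁻¹ - t * w, w) ∂ν +
      ENNReal.ofReal q * F (1 + z.1 * z.2 * z.2⁻¹ - t * z.2, z.2) := by
    refine Measurable.add ?_ (by fun_prop)
    exact Measurable.lintegral_prod_right (f := fun (z : ℝ × ℝ) (w : ℝ) =>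
      ENNReal.ofReal (p * w * z.2⁻¹ * k w z.2) * F (1 + z.1 * w * z.2⁻¹ - t * w, w))
      (by fun_prop)
  refine Measurable.ite (measurableSet_lt (by fun_prop) measurable_fst) (by fun_prop) ?_
  convert hboundary using 2 with z
  exact lintegral_ell hkm z.2 (by fun_prop)

theorem TtENNReal_mono {F G : ℝ × ℝ → ℝ≥0∞} (hFG : F ≤ G) :
    TtENNReal p q k ν V t F ≤ TtENNReal p q k ν V t G := fun z => by
  simp only [TtENNReal]
  split_ifs
  exacts [hFG _, lintegral_mono fun _ => hFG _]

theorem ofReal_abs_Tt_le_TtENNReal (f : ℝ × ℝ → ℝ) (z : ℝ × ℝ) :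
    ENNReal.ofReal |Tt p q k ν V t f z| ≤
      TtENNReal p q k ν V t (fun z => ENNReal.ofReal |f z|) z := by
  simp only [Tt, TtENNReal]
  split_ifs
  · exact le_rfl
  · rw [← Real.enorm_eq_ofReal_abs]
    exact (enorm_integral_le_lintegral_enorm _).trans_eq
      (lintegral_congr fun _ => Real.enorm_eq_ofReal_abs _)

theorem setLIntegral_Ioo_TtENNReal_eq_remainingMass {F : ℝ × ℝ → ℝ≥0∞} (hF : Measurable F)
    (v : ℝ) :
    ∫⁻ x in Ioo (t * v) 1, TtENNReal p q k ν V t F (x, v) = remainingMass t F v := by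
  have hshift := (measurePreserving_sub_right volume (t * v)).setLIntegral_comp_preimage
    (measurableSet_Ioo (a := 0) (b := 1 - t * v)) (f := fun x => F (x, v)) (by fun_prop)
  rw [preimage_sub_const_Ioo, zero_add, sub_add_cancel] at hshift
  rw [remainingMass, ← hshift]
  exact setLIntegral_congr_fun measurableSet_Ioo fun x hx => if_pos hx.1

theorem setLIntegral_Ioc_comp_eq_outflowMass {F : ℝ × ℝ → ℝ≥0∞} (hF : Measurable F) {v w : ℝ}
    (hv : 0 < v) (hw : 0 < w) :
    ∫⁻ x in Ioc 0 (t * v), F (1 + x * w * v⁻¹ - t * w, w) =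
      ENNReal.ofReal (v / w) * outflowMass t F w := by
  have hsubst := setLIntegral_Ioc_comp_mul_add (by positivity : 0 < w * v⁻¹) (1 - t * w)
    (1 - t * w) 1 (g := fun y => F (y, w)) (by fun_prop)
  rw [sub_self, zero_div, show (1 - (1 - t * w)) / (w * v⁻¹) = t * v by field_simp; ring,
    show (w * v⁻¹)⁻¹ = v / w by field_simp] at hsubst
  rw [outflowMass, ← hsubst]
  refine setLIntegral_congr_fun measurableSet_Ioc fun x _ => ?_
  ring_nf

theorem setLIntegral_Ioc_TtENNReal [SFinite ν] (hp : 0 ≤ p) (hVpos : V ⊆ Ioi 0)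
    (hVm : MeasurableSet V) (hkm : Measurable (Function.uncurry k)) (hknn : ∀ w v, 0 ≤ k w v)
    {F : ℝ × ℝ → ℝ≥0∞} (hF : Measurable F) {v : ℝ} (hv : 0 < v) :
    ∫⁻ x in Ioc 0 (t * v), TtENNReal p q k ν V t F (x, v) =
      ENNReal.ofReal p * ∫⁻ w in V, ENNReal.ofReal (k w v) * outflowMass t F w ∂ν +
        ENNReal.ofReal q * outflowMass t F v := by
  have hfiber : ∀ x ∈ Ioc 0 (t * v), TtENNReal p q k ν V t F (x, v) =
      ∫⁻ w in V, ENNReal.ofReal (p * w * v⁻¹ * k w v) * F (1 + x * w * v⁻¹ - t * w, w) ∂ν +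
        ENNReal.ofReal q * F (1 + x * v * v⁻¹ - t * v, v) := fun x hx => by
    simp only [TtENNReal, if_neg (not_lt.2 hx.2)]
    exact lintegral_ell hkm v (by fun_prop)
  rw [setLIntegral_congr_fun measurableSet_Ioc hfiber, lintegral_add_right _ (by fun_prop),
    lintegral_const_mul' _ _ ENNReal.ofReal_ne_top, setLIntegral_Ioc_comp_eq_outflowMass hF hv hv,
    div_self hv.ne', ENNReal.ofReal_one, one_mul,
    lintegral_lintegral_swap (by fun_prop), ← lintegral_const_mul' _ _ ENNReal.ofReal_ne_top]
  congr 1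
  refine setLIntegral_congr_fun hVm fun w hw => ?_
  have hw0 : 0 < w := hVpos hw
  rw [lintegral_const_mul' _ _ ENNReal.ofReal_ne_top,
    setLIntegral_Ioc_comp_eq_outflowMass hF hv hw0, ← mul_assoc, ← mul_assoc,
    ← ENNReal.ofReal_mul (by have := hknn w v; positivity), ← ENNReal.ofReal_mul hp]
  congr 2
  field_simp

theorem setLIntegral_Ioo_zero_one_TtENNReal [SFinite ν] (hp : 0 ≤ p) (hVpos : V ⊆ Ioi 0)
    (hVm : MeasurableSet V) (hkm : Measurable (Function.uncurry k)) (hknn : ∀ w v, 0 ≤ k w v)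
    {F : ℝ × ℝ → ℝ≥0∞} (hF : Measurable F) {v : ℝ} (hv : 0 < v) (htv₀ : 0 ≤ t * v)
    (htv₁ : t * v < 1) :
    ∫⁻ x in Ioo 0 1, TtENNReal p q k ν V t F (x, v) =
      remainingMass t F v +
        (ENNReal.ofReal p * ∫⁻ w in V, ENNReal.ofReal (k w v) * outflowMass t F w ∂ν +
          ENNReal.ofReal q * outflowMass t F v) := by
  rw [← Ioc_union_Ioo_eq_Ioo htv₀ htv₁,
    lintegral_union measurableSet_Ioo (Ioc_disjoint_Ioi_same.mono_right Ioo_subset_Ioi_self),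
    add_comm, setLIntegral_Ioo_TtENNReal_eq_remainingMass hF,
    setLIntegral_Ioc_TtENNReal hp hVpos hVm hkm hknn hF hv]

theorem setLIntegral_ofReal_kernel_eq_one (hknn : ∀ w v, 0 ≤ k w v)
    (hk1 : ∀ w ∈ V, ∫ v in V, k w v ∂ν = 1) {w : ℝ} (hw : w ∈ V) :
    ∫⁻ v in V, ENNReal.ofReal (k w v) ∂ν = 1 := by
  have hint : Integrable (k w) (ν.restrict V) :=
    Integrable.of_integral_ne_zero (by rw [hk1 w hw]; exact one_ne_zero)
  rw [← ofReal_integral_eq_lintegral_ofReal hint (ae_of_all _ (hknn w)), hk1 w hw,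
    ENNReal.ofReal_one]

theorem setLIntegral_setLIntegral_kernel_mul [SFinite ν] (hVm : MeasurableSet V)
    (hkm : Measurable (Function.uncurry k)) (hknn : ∀ w v, 0 ≤ k w v)
    (hk1 : ∀ w ∈ V, ∫ v in V, k w v ∂ν = 1) {g : ℝ → ℝ≥0∞} (hg : Measurable g) :
    ∫⁻ v in V, ∫⁻ w in V, ENNReal.ofReal (k w v) * g w ∂ν ∂ν = ∫⁻ w in V, g w ∂ν := by
  rw [lintegral_lintegral_swap (by fun_prop)]
  refine setLIntegral_congr_fun hVm fun w hw => ?_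
  rw [lintegral_mul_const _ (by fun_prop), setLIntegral_ofReal_kernel_eq_one hknn hk1 hw,
    one_mul]

theorem setLIntegral_prod_eq_remainingMass_add_outflowMass [SFinite ν] (hVm : MeasurableSet V)
    (hVpos : V ⊆ Ioi 0) (ht : 0 ≤ t) (htV : ∀ v ∈ V, t * v < 1)
    {F : ℝ × ℝ → ℝ≥0∞} (hF : Measurable F) :
    ∫⁻ z in Ioo 0 1 ×ˢ V, F z ∂(volume.prod ν) =
      ∫⁻ v in V, remainingMass t F v ∂ν + ∫⁻ v in V, outflowMass t F v ∂ν := by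
  rw [setLIntegral_prod_symm _ hF.aemeasurable,
    ← lintegral_add_left (measurable_remainingMass t hF)]
  refine setLIntegral_congr_fun hVm fun v hv => ?_
  have htv₀ : 0 ≤ 1 - t * v := by linarith [htV v hv]
  have htv₁ : 1 - t * v ≤ 1 := by nlinarith [(hVpos hv).out]
  rw [remainingMass, outflowMass, Measure.restrict_congr_set Ioo_ae_eq_Ioc,
    Measure.restrict_congr_set (Ioo_ae_eq_Ioc (a := (0 : ℝ))),
    ← lintegral_union measurableSet_Ioc (Ioc_disjoint_Ioc_of_le le_rfl),
    Ioc_union_Ioc_eq_Ioc htv₀ htv₁]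

theorem setLIntegral_TtENNReal [SFinite ν] (hp : 0 ≤ p) (hq : 0 ≤ q) (hVm : MeasurableSet V)
    (hVpos : V ⊆ Ioi 0) (ht : 0 ≤ t) (htV : ∀ v ∈ V, t * v < 1)
    (hkm : Measurable (Function.uncurry k)) (hknn : ∀ w v, 0 ≤ k w v)
    (hk1 : ∀ w ∈ V, ∫ v in V, k w v ∂ν = 1) {F : ℝ × ℝ → ℝ≥0∞} (hF : Measurable F) :
    ∫⁻ z in Ioo 0 1 ×ˢ V, TtENNReal p q k ν V t F z ∂(volume.prod ν) =
      ∫⁻ v in V, remainingMass t F v ∂ν +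
        ENNReal.ofReal (p + q) * ∫⁻ v in V, outflowMass t F v ∂ν := by
  have hfiber : ∀ v ∈ V, ∫⁻ x in Ioo 0 1, TtENNReal p q k ν V t F (x, v) = _ :=
    fun v hv => setLIntegral_Ioo_zero_one_TtENNReal hp hVpos hVm hkm hknn hF (hVpos hv)
      (mul_nonneg ht (hVpos hv).out.le) (htV v hv)
  have hout := measurable_outflowMass t hF
  rw [setLIntegral_prod_symm _ (measurable_TtENNReal hkm hF).aemeasurable,
    setLIntegral_congr_fun hVm hfiber, lintegral_add_left (measurable_remainingMass t hF),
    lintegral_add_right _ (hout.const_mul _), lintegral_const_mul' _ _ ENNReal.ofReal_ne_top,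
    lintegral_const_mul' _ _ ENNReal.ofReal_ne_top,
    setLIntegral_setLIntegral_kernel_mul hVm hkm hknn hk1 hout, ENNReal.ofReal_add hp hq, add_mul]

theorem setLIntegral_TtENNReal_le [SFinite ν] (hp : 0 ≤ p) (hq : 0 ≤ q) (hVm : MeasurableSet V)
    (hVpos : V ⊆ Ioi 0) (ht : 0 ≤ t) (htV : ∀ v ∈ V, t * v < 1)
    (hkm : Measurable (Function.uncurry k)) (hknn : ∀ w v, 0 ≤ k w v)
    (hk1 : ∀ w ∈ V, ∫ v in V, k w v ∂ν = 1) {F : ℝ × ℝ → ℝ≥0∞} (hF : Measurable F) :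
    ∫⁻ z in Ioo 0 1 ×ˢ V, TtENNReal p q k ν V t F z ∂(volume.prod ν) ≤
      ENNReal.ofReal (max 1 (p + q)) * ∫⁻ z in Ioo 0 1 ×ˢ V, F z ∂(volume.prod ν) := by
  rw [setLIntegral_TtENNReal hp hq hVm hVpos ht htV hkm hknn hk1 hF,
    setLIntegral_prod_eq_remainingMass_add_outflowMass hVm hVpos ht htV hF, mul_add]
  gcongr
  · exact le_mul_of_one_le_left' (by simp)
  · exact le_max_right _ _

theorem setIntegral_abs_Tt_le [SFinite ν] (hp : 0 ≤ p) (hq : 0 ≤ q) (hVm : MeasurableSet V)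
    (hVpos : V ⊆ Ioi 0) (ht : 0 ≤ t) (htV : ∀ v ∈ V, t * v < 1)
    (hkm : Measurable (Function.uncurry k)) (hknn : ∀ w v, 0 ≤ k w v)
    (hk1 : ∀ w ∈ V, ∫ v in V, k w v ∂ν = 1) {f : ℝ × ℝ → ℝ}
    (hf : IntegrableOn f (Ioo 0 1 ×ˢ V) (volume.prod ν)) :
    ∫ z in Ioo 0 1 ×ˢ V, |Tt p q k ν V t f z| ∂(volume.prod ν) ≤
      max 1 (p + q) * ∫ z in Ioo 0 1 ×ˢ V, |f z| ∂(volume.prod ν) := by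
  -- `Tt` reads `f` pointwise, so `|f|` is replaced by a measurable majorant, not an a.e. version
  obtain ⟨G, hGm, hfG, hGf⟩ := hf.aemeasurable.abs.ennreal_ofReal.exists_measurable_ge_ae_eq
  have hmax : 0 ≤ max 1 (p + q) := zero_le_one.trans (le_max_left _ _)
  rw [← ENNReal.ofReal_le_ofReal_iff (by positivity), ENNReal.ofReal_mul hmax,
    ofReal_integral_eq_lintegral_ofReal hf.abs (ae_of_all _ fun _ => abs_nonneg _),
    ← lintegral_congr_ae hGf]
  calc ENNReal.ofReal (∫ z in Ioo 0 1 ×ˢ V, |Tt p q k ν V t f z| ∂(volume.prod ν))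
      = ‖∫ z in Ioo 0 1 ×ˢ V, |Tt p q k ν V t f z| ∂(volume.prod ν)‖ₑ :=
        (Real.enorm_of_nonneg (integral_nonneg fun _ => abs_nonneg _)).symm
    _ ≤ ∫⁻ z in Ioo 0 1 ×ˢ V, ENNReal.ofReal |Tt p q k ν V t f z| ∂(volume.prod ν) :=
        (enorm_integral_le_lintegral_enorm _).trans_eq
          (lintegral_congr fun _ => by rw [Real.enorm_eq_ofReal_abs, abs_abs])
    _ ≤ ∫⁻ z in Ioo 0 1 ×ˢ V, TtENNReal p q k ν V t G z ∂(volume.prod ν) :=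
        lintegral_mono fun z => (ofReal_abs_Tt_le_TtENNReal f z).trans (TtENNReal_mono hfG z)
    _ ≤ _ := setLIntegral_TtENNReal_le hp hq hVm hVpos ht htV hkm hknn hk1 hGm

theorem setLIntegral_TtENNReal_of_outflowMass_eq_zero [SFinite ν] (hp : 0 ≤ p) (hq : 0 ≤ q)
    (hVm : MeasurableSet V) (hVpos : V ⊆ Ioi 0) (ht : 0 ≤ t) (htV : ∀ v ∈ V, t * v < 1)
    (hkm : Measurable (Function.uncurry k)) (hknn : ∀ w v, 0 ≤ k w v)
    (hk1 : ∀ w ∈ V, ∫ v in V, k w v ∂ν = 1) {F : ℝ × ℝ → ℝ≥0∞} (hF : Measurable F)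
    (hout : ∀ v ∈ V, outflowMass t F v = 0) :
    ∫⁻ z in Ioo 0 1 ×ˢ V, TtENNReal p q k ν V t F z ∂(volume.prod ν) =
      ∫⁻ z in Ioo 0 1 ×ˢ V, F z ∂(volume.prod ν) := by
  rw [setLIntegral_TtENNReal hp hq hVm hVpos ht htV hkm hknn hk1 hF,
    setLIntegral_prod_eq_remainingMass_add_outflowMass hVm hVpos ht htV hF,
    setLIntegral_eq_zero hVm hout, mul_zero]

theorem setLIntegral_TtENNReal_of_remainingMass_eq_zero [SFinite ν] (hp : 0 ≤ p) (hq : 0 ≤ q)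
    (hVm : MeasurableSet V) (hVpos : V ⊆ Ioi 0) (ht : 0 ≤ t) (htV : ∀ v ∈ V, t * v < 1)
    (hkm : Measurable (Function.uncurry k)) (hknn : ∀ w v, 0 ≤ k w v)
    (hk1 : ∀ w ∈ V, ∫ v in V, k w v ∂ν = 1) {F : ℝ × ℝ → ℝ≥0∞} (hF : Measurable F)
    (hrem : ∀ v ∈ V, remainingMass t F v = 0) :
    ∫⁻ z in Ioo 0 1 ×ˢ V, TtENNReal p q k ν V t F z ∂(volume.prod ν) =
      ENNReal.ofReal (p + q) * ∫⁻ z in Ioo 0 1 ×ˢ V, F z ∂(volume.prod ν) := by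
  rw [setLIntegral_TtENNReal hp hq hVm hVpos ht htV hkm hknn hk1 hF,
    setLIntegral_prod_eq_remainingMass_add_outflowMass hVm hVpos ht htV hF,
    setLIntegral_eq_zero hVm hrem, zero_add, zero_add]

theorem setIntegral_abs_Tt_eq_toReal [SFinite ν] (hkm : Measurable (Function.uncurry k))
    {f : ℝ × ℝ → ℝ} (hfm : Measurable f) (hf₀ : 0 ≤ f)
    (hfin : ∫⁻ z in Ioo 0 1 ×ˢ V, TtENNReal p q k ν V t (fun z => ENNReal.ofReal (f z)) z
      ∂(volume.prod ν) ≠ ∞) :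
    ∫ z in Ioo 0 1 ×ˢ V, |Tt p q k ν V t f z| ∂(volume.prod ν) =
      (∫⁻ z in Ioo 0 1 ×ˢ V, TtENNReal p q k ν V t (fun z => ENNReal.ofReal (f z)) z
        ∂(volume.prod ν)).toReal := by
  have hT := measurable_TtENNReal (p := p) (q := q) (ν := ν) (V := V) (t := t) hkm
    hfm.ennreal_ofReal
  have hpt : ∀ z, |Tt p q k ν V t f z| =
      (TtENNReal p q k ν V t (fun z => ENNReal.ofReal (f z)) z).toReal := fun z => by
    simp only [Tt, TtENNReal]
    split_ifs
    · rw [abs_of_nonneg (hf₀ _), ENNReal.toReal_ofReal (hf₀ _)]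
    · rw [integral_eq_lintegral_of_nonneg_ae (f := fun w => f (1 + z.1 * w * z.2⁻¹ - t * w, w))
        (ae_of_all _ fun _ => hf₀ _) (by fun_prop : Measurable _).aestronglyMeasurable,
        abs_of_nonneg ENNReal.toReal_nonneg]
  rw [integral_congr_ae (ae_of_all _ hpt), integral_toReal hT.aemeasurable (ae_lt_top hT hfin)]

theorem exists_setIntegral_abs_Tt_eq [SFinite ν] (hkm : Measurable (Function.uncurry k))
    {S : Set (ℝ × ℝ)} (hSm : MeasurableSet S) (hSΩ : S ⊆ Ioo 0 1 ×ˢ V)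
    (hS₀ : (volume.prod ν) S ≠ 0) (hSfin : (volume.prod ν) S ≠ ∞) {C : ℝ} (hC : 0 ≤ C)
    (hTS : ∀ c : ℝ≥0∞,
      ∫⁻ z in Ioo 0 1 ×ˢ V, TtENNReal p q k ν V t (S.indicator fun _ => c) z ∂(volume.prod ν) =
        ENNReal.ofReal C * ∫⁻ z in Ioo 0 1 ×ˢ V, S.indicator (fun _ => c) z ∂(volume.prod ν)) :
    ∃ f : ℝ × ℝ → ℝ, IntegrableOn f (Ioo 0 1 ×ˢ V) (volume.prod ν) ∧
      ∫ z in Ioo 0 1 ×ˢ V, |f z| ∂(volume.prod ν) = 1 ∧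
      ∫ z in Ioo 0 1 ×ˢ V, |Tt p q k ν V t f z| ∂(volume.prod ν) = C := by
  set c := ((volume.prod ν) S).toReal⁻¹
  have hc : 0 ≤ c := by positivity
  have hcS : c * ((volume.prod ν) S).toReal = 1 :=
    inv_mul_cancel₀ (ENNReal.toReal_ne_zero.2 ⟨hS₀, hSfin⟩)
  have hrestrict : (volume.prod ν).restrict (Ioo 0 1 ×ˢ V) S = (volume.prod ν) S := by
    rw [Measure.restrict_apply hSm, inter_eq_left.2 hSΩ]
  have hofReal : (fun z => ENNReal.ofReal (S.indicator (fun _ => c) z)) =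
      S.indicator fun _ => ENNReal.ofReal c :=
    (indicator_comp_of_zero (g := ENNReal.ofReal) ENNReal.ofReal_zero).symm
  have hTf : ∫⁻ z in Ioo 0 1 ×ˢ V,
      TtENNReal p q k ν V t (fun z => ENNReal.ofReal (S.indicator (fun _ => c) z)) z
        ∂(volume.prod ν) = ENNReal.ofReal C * (ENNReal.ofReal c * (volume.prod ν) S) := by
    rw [hofReal, hTS, lintegral_indicator_const hSm, hrestrict]
  refine ⟨S.indicator fun _ => c,
    ((integrable_indicator_iff hSm).2 (integrableOn_const hSfin)).integrableOn, ?_, ?_⟩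
  · rw [integral_congr_ae (ae_of_all _ fun z => abs_of_nonneg (indicator_nonneg (fun _ _ => hc) z)),
      integral_indicator_const c hSm, measureReal_def, hrestrict, smul_eq_mul, mul_comm, hcS]
  · rw [setIntegral_abs_Tt_eq_toReal hkm (measurable_const.indicator hSm)
      (indicator_nonneg fun _ _ => hc) (by rw [hTf]; finiteness), hTf, ENNReal.toReal_mul,
      ENNReal.toReal_mul, ENNReal.toReal_ofReal hC, ENNReal.toReal_ofReal hc, hcS, mul_one]

theorem exists_setIntegral_abs_Tt_eq_of_support [SigmaFinite ν]
    (hkm : Measurable (Function.uncurry k)) (hVm : MeasurableSet V) (hνV : 0 < ν V)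
    {l r : ℝ → ℝ} (hl : Measurable l) (hr : Measurable r) (hl₀ : ∀ v ∈ V, 0 ≤ l v)
    (hlr : ∀ v ∈ V, l v < r v) (hr₁ : ∀ v ∈ V, r v ≤ 1) {C : ℝ} (hC : 0 ≤ C)
    (hT : ∀ F : ℝ × ℝ → ℝ≥0∞, Measurable F → (∀ z : ℝ × ℝ, z.1 ∉ Ioo (l z.2) (r z.2) → F z = 0) →
      ∫⁻ z in Ioo 0 1 ×ˢ V, TtENNReal p q k ν V t F z ∂(volume.prod ν) =
        ENNReal.ofReal C * ∫⁻ z in Ioo 0 1 ×ˢ V, F z ∂(volume.prod ν)) :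
    ∃ f : ℝ × ℝ → ℝ, IntegrableOn f (Ioo 0 1 ×ˢ V) (volume.prod ν) ∧
      ∫ z in Ioo 0 1 ×ˢ V, |f z| ∂(volume.prod ν) = 1 ∧
      ∫ z in Ioo 0 1 ×ˢ V, |Tt p q k ν V t f z| ∂(volume.prod ν) = C := by
  obtain ⟨W, hWm, hWV, hW₀, hWfin⟩ := Measure.exists_subset_measure_lt_top hVm hνV
  have hSm := measurableSet_setOf_mem_Ioo hWm hl hr
  have hSW : {z : ℝ × ℝ | z.2 ∈ W ∧ z.1 ∈ Ioo (l z.2) (r z.2)} ⊆ Ioo 0 1 ×ˢ W :=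
    fun z ⟨hzW, hz⟩ =>
      ⟨⟨(hl₀ _ (hWV hzW)).trans_lt hz.1, hz.2.trans_le (hr₁ _ (hWV hzW))⟩, hzW⟩
  refine exists_setIntegral_abs_Tt_eq hkm hSm (hSW.trans (prod_mono subset_rfl hWV)) ?_ ?_ hC
    fun c => hT _ (measurable_const.indicator hSm) fun z hz => indicator_of_notMem (hz ·.2) _
  · rw [volume_prod_setOf_mem_Ioo hWm hl hr, ← pos_iff_ne_zero,
      setLIntegral_pos_iff (by fun_prop), inter_eq_right.2 fun v hv => by simp [hlr v (hWV hv)]]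
    exact hW₀
  · refine ((measure_mono hSW).trans_lt ?_).ne
    rwa [Measure.prod_prod, Real.volume_Ioo, sub_zero, ENNReal.ofReal_one, one_mul]

theorem exists_setIntegral_abs_Tt_eq_max [SigmaFinite ν] (hp : 0 ≤ p) (hq : 0 ≤ q)
    (hVm : MeasurableSet V) (hVpos : V ⊆ Ioi 0) (ht : 0 < t) (htV : ∀ v ∈ V, t * v < 1)
    (hkm : Measurable (Function.uncurry k)) (hknn : ∀ w v, 0 ≤ k w v)
    (hk1 : ∀ w ∈ V, ∫ v in V, k w v ∂ν = 1) (hνV : 0 < ν V) :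
    ∃ f : ℝ × ℝ → ℝ, IntegrableOn f (Ioo 0 1 ×ˢ V) (volume.prod ν) ∧
      ∫ z in Ioo 0 1 ×ˢ V, |f z| ∂(volume.prod ν) = 1 ∧
      ∫ z in Ioo 0 1 ×ˢ V, |Tt p q k ν V t f z| ∂(volume.prod ν) = max 1 (p + q) := by
  rcases le_total (p + q) 1 with hpq | hpq
  · rw [max_eq_left hpq]
    refine exists_setIntegral_abs_Tt_eq_of_support hkm hVm hνV (l := 0) (r := fun v => 1 - t * v)
      (by fun_prop) (by fun_prop) (fun _ _ => le_rfl) (fun v hv => by simpa using htV v hv)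
      (fun v hv => by simpa using (mul_pos ht (hVpos hv)).le) zero_le_one fun F hF hsupp => ?_
    rw [ENNReal.ofReal_one, one_mul]
    exact setLIntegral_TtENNReal_of_outflowMass_eq_zero hp hq hVm hVpos ht.le htV hkm hknn hk1 hF
      fun v _ => setLIntegral_eq_zero measurableSet_Ioc fun x hx =>
        hsupp _ fun h => lt_asymm h.2 hx.1
  · rw [max_eq_right hpq]
    refine exists_setIntegral_abs_Tt_eq_of_support hkm hVm hνV (l := fun v => 1 - t * v) (r := 1)
      (by fun_prop) (by fun_prop) (fun v hv => by simpa using (htV v hv).le)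
      (fun v hv => by simpa using mul_pos ht (hVpos hv)) (fun _ _ => le_rfl) (by linarith)
      fun F hF hsupp => ?_
    exact setLIntegral_TtENNReal_of_remainingMass_eq_zero hp hq hVm hVpos ht.le htV hkm hknn hk1 hF
      fun v _ => setLIntegral_eq_zero measurableSet_Ioo fun x hx =>
        hsupp _ fun h => lt_asymm h.1 hx.2

end

theorem stmt8_general
    (a b p q : ℝ) (ha : 0 ≤ a) (hab : a < b)
    (hp : 0 ≤ p) (hq : 0 ≤ q)
    (V : Set ℝ) (hV : V ⊆ Set.Ioo a b) (hVm : MeasurableSet V)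
    (ν : Measure ℝ) [SigmaFinite ν]
    (k : ℝ → ℝ → ℝ) (hkm : Measurable (Function.uncurry k))
    (hknn : ∀ w v : ℝ, 0 ≤ k w v)
    (hk1 : ∀ w ∈ V, ∫ v in V, k w v ∂ν = 1)
    (hνV : 0 < ν V)
    (t : ℝ) (ht0 : 0 < t) (ht1 : t ≤ b⁻¹) :
    (∀ f : ℝ × ℝ → ℝ,
        IntegrableOn f ((Set.Ioo (0 : ℝ) 1) ×ˢ V) ((volume : Measure ℝ).prod ν) →
        ∫ z in (Set.Ioo (0 : ℝ) 1) ×ˢ V, |Tt p q k ν V t f z|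
            ∂((volume : Measure ℝ).prod ν)
          ≤ max 1 (p + q) *
            ∫ z in (Set.Ioo (0 : ℝ) 1) ×ˢ V, |f z| ∂((volume : Measure ℝ).prod ν)) ∧
    (∀ ε : ℝ, 0 < ε →
        ∃ f : ℝ × ℝ → ℝ,
          IntegrableOn f ((Set.Ioo (0 : ℝ) 1) ×ˢ V) ((volume : Measure ℝ).prod ν) ∧
          ∫ z in (Set.Ioo (0 : ℝ) 1) ×ˢ V, |f z| ∂((volume : Measure ℝ).prod ν) = 1 ∧
          max 1 (p + q) - ε <
            ∫ z in (Set.Ioo (0 : ℝ) 1) ×ˢ V, |Tt p q k ν V t f z|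
              ∂((volume : Measure ℝ).prod ν)) := by
  have hb : 0 < b := ha.trans_lt hab
  have hVpos : V ⊆ Ioi 0 := fun v hv => ha.trans_lt (hV hv).1
  have htV : ∀ v ∈ V, t * v < 1 := fun v hv =>
    calc t * v < b⁻¹ * b := mul_lt_mul' ht1 (hV hv).2 (hVpos hv).out.le (inv_pos.2 hb)
      _ = 1 := inv_mul_cancel₀ hb.ne'
  refine ⟨fun f hf => setIntegral_abs_Tt_le hp hq hVm hVpos ht0.le htV hkm hknn hk1 hf,
    fun ε hε => ?_⟩
  obtain ⟨f, hf, hf1, hTf⟩ :=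
    exists_setIntegral_abs_Tt_eq_max hp hq hVm hVpos ht0 htV hkm hknn hk1 hνV
  exact ⟨f, hf, hf1, hTf ▸ sub_lt_self _ hε⟩

theorem stmt8
    (a b p q : ℝ) (ha : 0 ≤ a) (hab : a < b)
    (hp : 0 ≤ p) (hq : 0 ≤ q) (hpq : 0 < p + q)
    (V : Set ℝ) (hV : V ⊆ Set.Ioo a b) (hVm : MeasurableSet V)
    (ν : Measure ℝ) [SigmaFinite ν]
    (k : ℝ → ℝ → ℝ) (hkm : Measurable (Function.uncurry k))
    (hknn : ∀ w v : ℝ, 0 ≤ k w v)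
    (hk1 : ∀ w ∈ V, ∫ v in V, k w v ∂ν = 1)
    (hνV : 0 < ν V)
    (t : ℝ) (ht0 : 0 < t) (ht1 : t ≤ b⁻¹) :
    (∀ f : ℝ × ℝ → ℝ,
        IntegrableOn f ((Set.Ioo (0 : ℝ) 1) ×ˢ V) ((volume : Measure ℝ).prod ν) →
        ∫ z in (Set.Ioo (0 : ℝ) 1) ×ˢ V, |Tt p q k ν V t f z|
            ∂((volume : Measure ℝ).prod ν)
          ≤ max 1 (p + q) *
            ∫ z in (Set.Ioo (0 : ℝ) 1) ×ˢ V, |f z| ∂((volume : Measure ℝ).prod ν)) ∧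
    (∀ ε : ℝ, 0 < ε →
        ∃ f : ℝ × ℝ → ℝ,
          IntegrableOn f ((Set.Ioo (0 : ℝ) 1) ×ˢ V) ((volume : Measure ℝ).prod ν) ∧
          ∫ z in (Set.Ioo (0 : ℝ) 1) ×ˢ V, |f z| ∂((volume : Measure ℝ).prod ν) = 1 ∧
          max 1 (p + q) - ε <
            ∫ z in (Set.Ioo (0 : ℝ) 1) ×ˢ V, |Tt p q k ν V t f z|
              ∂((volume : Measure ℝ).prod ν)) :=
  stmt8_general a b p q ha hab hp hq V hV hVm ν k hkm hknn hk1 hνV t ht0 ht1
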